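/- arXiv:2001.02373 — 3 statements merged into one kernel-verified Lean document; each statement's English description precedes it below -/
import Mathlib

section
/- Let $T^2$ be a bi-tree (product of two finite trees) with bi-parameter Hardy operator $\mathbb{I} = I_1 I_2$. Let $0 < \delta \leq \lambda/4$ and let $f : T^2 \to [0,\infty)$ be supported on the set $\{\mathbb{I} f \leq \delta\}$. Then pointwise $(\mathbb{I} f)\, \mathbf{1}_{\{\mathbb{I} f \geq \lambda\}} \leq 4\lambda^{-1}\, \mathbb{I}( I_1 f \cdot I_2 f )$. -/
open Finset
open scoped Classical

/-- A tree order: the set of elements above any given element is totally ordered. -/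
def IsTreeOrder (T : Type*) [PartialOrder T] : Prop :=
  ∀ ω a b : T, ω ≤ a → ω ≤ b → a ≤ b ∨ b ≤ a

/-- The Hardy operator `I f α = ∑_{α' ≥ α} f α'`. -/
noncomputable def hI {T : Type*} [Fintype T] [PartialOrder T] (f : T → ℝ) (a : T) : ℝ :=
  ∑ b, if a ≤ b then f b else 0

/-- The adjoint Hardy operator `I* f β = ∑_{α ≤ β} f α`. -/
noncomputable def hIstar {T : Type*} [Fintype T] [PartialOrder T] (f : T → ℝ) (b : T) : ℝ :=
  ∑ a, if a ≤ b then f a else 0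

/-- `b` is a child of `β`: a maximal element of the set of elements strictly below `β`. -/
def IsChild {T : Type*} [PartialOrder T] (b β : T) : Prop :=
  b < β ∧ ∀ c, b < c → c < β → False

/-- The difference operator `Δ f β = f β - ∑_{β' ∈ ch β} f β'`. -/
noncomputable def hDelta {T : Type*} [Fintype T] [PartialOrder T] (f : T → ℝ) (β : T) : ℝ :=
  f β - ∑ b, if IsChild b β then f b else 0

/-- A superadditive function on a tree: `f β ≥ ∑_{β' ∈ ch β} f β'` for all `β`. -/
def Superadd {T : Type*} [Fintype T] [PartialOrder T] (f : T → ℝ) : Prop :=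
  ∀ β : T, (∑ b, if IsChild b β then f b else 0) ≤ f β

/-- The Hardy operator acting in the first coordinate of a bi-tree. -/
noncomputable def hI1 {T1 T2 : Type*} [Fintype T1] [PartialOrder T1]
    (f : T1 × T2 → ℝ) (a : T1 × T2) : ℝ :=
  ∑ b : T1, if a.1 ≤ b then f (b, a.2) else 0

/-- The Hardy operator acting in the second coordinate of a bi-tree. -/
noncomputable def hI2 {T1 T2 : Type*} [Fintype T2] [PartialOrder T2]
    (f : T1 × T2 → ℝ) (a : T1 × T2) : ℝ :=
  ∑ b : T2, if a.2 ≤ b then f (a.1, b) else 0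

/-- Superadditivity in the first parameter separately. -/
def Superadd1 {T1 T2 : Type*} [Fintype T1] [PartialOrder T1]
    (f : T1 × T2 → ℝ) : Prop :=
  ∀ (β : T1) (a2 : T2), (∑ b, if IsChild b β then f (b, a2) else 0) ≤ f (β, a2)

/-- Superadditivity in the second parameter separately. -/
def Superadd2 {T1 T2 : Type*} [Fintype T2] [PartialOrder T2]
    (f : T1 × T2 → ℝ) : Prop :=
  ∀ (a1 : T1) (β : T2), (∑ b, if IsChild b β then f (a1, b) else 0) ≤ f (a1, β)

/-!
Expand `(𝕀 f α)² = ∑_{β, β' ≥ α} f β f β'`. In a bi-tree, two points above `α` have comparable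
coordinates, so either `β ≤ β'`, `β' ≤ β`, or they are crossed (one is higher in the first
coordinate, the other in the second). The pairs with `β ≤ β'` contribute
`∑_{β ≥ α} f β 𝕀 f β ≤ δ 𝕀 f α` by the support condition, and the crossed pairs `(β, β')`
are exactly the terms of `𝕀(I₁ f · I₂ f)(α)`, indexed by the corner `(β'.1, β.2)`. Hence
`(𝕀 f α)² ≤ 2 𝕀(I₁ f · I₂ f)(α) + 2δ 𝕀 f α`, and `𝕀 f α ≥ λ ≥ 4δ` absorbs the last term.
-/

section PairSum

variable {T : Type*} [Fintype T]

noncomputable def pairSum (f : T → ℝ) (r : T → T → Prop) : ℝ :=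
  ∑ b, ∑ b', if r b b' then f b * f b' else 0

lemma pairSum_nonneg {f : T → ℝ} (hf : ∀ a, 0 ≤ f a) (r : T → T → Prop) :
    0 ≤ pairSum f r :=
  sum_nonneg fun b _ => sum_nonneg fun b' _ => by
    split_ifs
    exacts [mul_nonneg (hf b) (hf b'), le_rfl]

lemma pairSum_flip (f : T → ℝ) (r : T → T → Prop) :
    pairSum f (flip r) = pairSum f r := by
  unfold pairSum
  rw [sum_comm]
  simp only [flip, mul_comm]

lemma pairSum_le_add {f : T → ℝ} (hf : ∀ a, 0 ≤ f a) {r r₁ r₂ : T → T → Prop}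
    (h : ∀ b b', r b b' → r₁ b b' ∨ r₂ b b') :
    pairSum f r ≤ pairSum f r₁ + pairSum f r₂ := by
  unfold pairSum
  simp only [← sum_add_distrib]
  refine sum_le_sum fun b _ => sum_le_sum fun b' _ => ?_
  have := mul_nonneg (hf b) (hf b')
  have hbb := h b b'
  split_ifs <;> first | linarith | tauto

end PairSum

section HardyOperator

variable {T : Type*} [Fintype T] [PartialOrder T]

lemma hI_nonneg {f : T → ℝ} (hf : ∀ a, 0 ≤ f a) (α : T) : 0 ≤ hI f α :=
  sum_nonneg fun b _ => by
    split_ifs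
    exacts [hf b, le_rfl]

lemma hI_mul_self (f : T → ℝ) (α : T) :
    hI f α * hI f α = pairSum f (fun b b' => α ≤ b ∧ α ≤ b') := by
  rw [hI, sum_mul_sum]
  exact sum_congr rfl fun b _ => sum_congr rfl fun b' _ => by split_ifs <;> simp_all

lemma pairSum_chain_le {f : T → ℝ} (hf : ∀ a, 0 ≤ f a) {δ : ℝ}
    (hsupp : ∀ a, f a ≠ 0 → hI f a ≤ δ) (α : T) :
    pairSum f (fun b b' => α ≤ b ∧ b ≤ b') ≤ δ * hI f α := by
  have hterm : ∀ b, (if α ≤ b then f b else 0) * hI f b ≤ δ * if α ≤ b then f b else 0 := by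
    intro b
    rw [mul_comm δ]
    split_ifs
    · rcases eq_or_ne (f b) 0 with h0 | h0
      · simp [h0]
      · exact mul_le_mul_of_nonneg_left (hsupp b h0) (hf b)
    · simp
  calc pairSum f (fun b b' => α ≤ b ∧ b ≤ b')
      = ∑ b, (if α ≤ b then f b else 0) * hI f b := by
        refine sum_congr rfl fun b _ => ?_
        rw [hI, mul_sum]
        exact sum_congr rfl fun b' _ => by split_ifs <;> simp_all
    _ ≤ ∑ b, δ * if α ≤ b then f b else 0 := sum_le_sum fun b _ => hterm b
    _ = δ * hI f α := by rw [hI, mul_sum]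

end HardyOperator

section TreeOrder

variable {T1 T2 : Type*} [PartialOrder T1] [PartialOrder T2]

lemma IsTreeOrder.prod_cases (h1 : IsTreeOrder T1) (h2 : IsTreeOrder T2) {α b b' : T1 × T2}
    (hb : α ≤ b) (hb' : α ≤ b') :
    b ≤ b' ∨ b' ≤ b ∨ (α ≤ (b'.1, b.2) ∧ b'.1 ≤ b.1 ∧ b.2 ≤ b'.2) ∨
      (α ≤ (b.1, b'.2) ∧ b.1 ≤ b'.1 ∧ b'.2 ≤ b.2) := by
  simp only [Prod.le_def] at hb hb' ⊢
  rcases h1 _ _ _ hb.1 hb'.1 with hx | hx <;> rcases h2 _ _ _ hb.2 hb'.2 with hy | hy <;>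
    simp_all

end TreeOrder

section BiTree

variable {T1 T2 : Type*} [Fintype T1] [PartialOrder T1] [Fintype T2] [PartialOrder T2]

lemma hI_hI1_mul_hI2 (f : T1 × T2 → ℝ) (α : T1 × T2) :
    hI (fun a => hI1 f a * hI2 f a) α
      = pairSum f (fun b b' => α ≤ (b'.1, b.2) ∧ b'.1 ≤ b.1 ∧ b.2 ≤ b'.2) := by
  let corner : Equiv.Perm ((T1 × T2) × (T1 × T2)) :=
    Function.Involutive.toPerm (fun p => ((p.2.1, p.1.2), (p.1.1, p.2.2))) fun _ => rfl
  calc hI (fun a => hI1 f a * hI2 f a) α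
      = ∑ s : T1 × T2, ∑ z : T1 × T2, if α ≤ s ∧ s.1 ≤ z.1 ∧ s.2 ≤ z.2
          then f (z.1, s.2) * f (s.1, z.2) else 0 := by
        refine sum_congr rfl fun s _ => ?_
        simp only [Fintype.sum_prod_type, hI1, hI2, sum_mul_sum]
        by_cases hs : α ≤ s
        · simp only [if_pos hs]
          exact sum_congr rfl fun x _ => sum_congr rfl fun y _ => by split_ifs <;> simp_all
        · simp [hs]
    _ = ∑ p : (T1 × T2) × (T1 × T2), if α ≤ p.1 ∧ p.1.1 ≤ p.2.1 ∧ p.1.2 ≤ p.2.2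
          then f (p.2.1, p.1.2) * f (p.1.1, p.2.2) else 0 := (Fintype.sum_prod_type' _).symm
    _ = ∑ p : (T1 × T2) × (T1 × T2), if α ≤ (p.2.1, p.1.2) ∧ p.2.1 ≤ p.1.1 ∧ p.1.2 ≤ p.2.2
          then f p.1 * f p.2 else 0 := Fintype.sum_equiv corner _ _ fun _ => rfl
    _ = pairSum f (fun b b' => α ≤ (b'.1, b.2) ∧ b'.1 ≤ b.1 ∧ b.2 ≤ b'.2) := by
        rw [Fintype.sum_prod_type]
        exact sum_congr rfl fun b _ => sum_congr rfl fun b' _ => by split_ifs <;> simp_all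

lemma hI_mul_self_le (h1 : IsTreeOrder T1) (h2 : IsTreeOrder T2) {f : T1 × T2 → ℝ}
    (hf : ∀ a, 0 ≤ f a) {δ : ℝ} (hsupp : ∀ a, f a ≠ 0 → hI f a ≤ δ) (α : T1 × T2) :
    hI f α * hI f α ≤ 2 * hI (fun a => hI1 f a * hI2 f a) α + 2 * δ * hI f α := by
  let chain : T1 × T2 → T1 × T2 → Prop := fun b b' => α ≤ b ∧ b ≤ b'
  let crossed : T1 × T2 → T1 × T2 → Prop := fun b b' =>
    α ≤ (b'.1, b.2) ∧ b'.1 ≤ b.1 ∧ b.2 ≤ b'.2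
  have hsplit : pairSum f (fun b b' => α ≤ b ∧ α ≤ b') ≤
      (pairSum f chain + pairSum f (flip chain)) +
        (pairSum f crossed + pairSum f (flip crossed)) := by
    refine (pairSum_le_add hf (r₁ := fun b b' => chain b b' ∨ flip chain b b')
      (r₂ := fun b b' => crossed b b' ∨ flip crossed b b') fun b b' ⟨hb, hb'⟩ => ?_).trans
      (add_le_add (pairSum_le_add hf fun _ _ => id) (pairSum_le_add hf fun _ _ => id))
    have := h1.prod_cases h2 hb hb'
    simp only [chain, crossed, flip]
    tauto
  rw [pairSum_flip, pairSum_flip] at hsplit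
  rw [hI_mul_self, hI_hI1_mul_hI2]
  linarith [pairSum_chain_le hf hsupp α]

end BiTree

theorem stmt5 {T1 T2 : Type*} [Fintype T1] [PartialOrder T1] [Fintype T2] [PartialOrder T2]
    (h1 : IsTreeOrder T1) (h2 : IsTreeOrder T2)
    (δ lam : ℝ) (hδ : 0 < δ) (hδlam : δ ≤ lam / 4)
    (f : T1 × T2 → ℝ) (hf : ∀ a, 0 ≤ f a)
    (hsupp : ∀ a, f a ≠ 0 → hI f a ≤ δ) (α : T1 × T2) :
    (if lam ≤ hI f α then hI f α else 0) ≤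
      4 / lam * hI (fun a => hI1 f a * hI2 f a) α := by
  have hlam : 0 < lam := by linarith
  have hS : 0 ≤ hI (fun a => hI1 f a * hI2 f a) α := hI_hI1_mul_hI2 f α ▸ pairSum_nonneg hf _
  split_ifs with hF
  · have hsq := hI_mul_self_le h1 h2 hf hsupp α
    have hnn := hI_nonneg hf α
    rw [div_mul_eq_mul_div, le_div_iff₀ hlam]
    nlinarith
  · positivity
end

section
/- Let $T$ be a finite tree with Hardy operator $I$ and adjoint $I^*$. Let $f, g : T \to [0,\infty)$ with $\operatorname{supp} f \subseteq \{Ig \leq \delta\}$ and $g$ superadditive, and let $\lambda \geq 10\delta > 0$. Define $\varphi := 2\lambda^{-1}\, If \cdot g \cdot \mathbf{1}_{\{Ig \leq 4\lambda\}}$. Then: (a) $I\varphi(\omega) \geq If(\omega)$ for every $\omega \in T$ with $Ig(\omega) \in [\lambda, 2\lambda]$; and (b) $\sum_{T} \varphi^2 \leq \frac{16\,\delta}{\lambda} \sum_T f^2$. -/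
open Finset
open scoped Classical

/-!
(a) For `a ≥ ω` the cut-off is inactive, and exchanging sums gives
`Iφ(ω) = (2/λ) ∑_{b ≥ ω} f(b) ∑_{ω ≤ a ≤ b} g(a)`. The tree property splits `{a ≥ ω}` into
`[ω, b]` and `{a > b}`, so on `supp f` the inner sum is `Ig(ω) - Ig(b) + g(b) ≥ λ - δ ≥ λ/2`.

(b) The points above `a` where `f ≠ 0` form a chain along which `∑ g ≤ δ`, so Cauchy–Schwarz gives
`(If(a))² ≤ δ ∑_{b ≥ a} f(b)²/g(b)`. Exchanging sums leaves
`∑_{a ≤ b, Ig(a) ≤ s} g(a)² ≤ s g(b)`, which follows from `g = I*Δg` with `Δg ≥ 0`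
(superadditivity): `∑ g(a)² = ∑_x Δg(x) ∑_{x ≤ a ≤ b, Ig(a) ≤ s} g(a)`, and each inner sum runs
along a chain, hence is at most `Ig` at its lowest point, which is `≤ s`.
-/

section

variable {T : Type*} [Fintype T] [PartialOrder T]

lemma hI_antitone {g : T → ℝ} (hg : ∀ a, 0 ≤ g a) : Antitone (hI g) := fun a b hab =>
  sum_le_sum fun c _ => by
    split_ifs with hb ha
    exacts [le_rfl, absurd (hab.trans hb) ha, hg c, le_rfl]

lemma hIstar_monotone {g : T → ℝ} (hg : ∀ a, 0 ≤ g a) : Monotone (hIstar g) :=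
  fun _ _ hab => hI_antitone (T := Tᵒᵈ) hg hab

lemma hI_congr {u v : T → ℝ} {ω : T} (h : ∀ a, ω ≤ a → u a = v a) : hI u ω = hI v ω :=
  sum_congr rfl fun a _ => by split_ifs with ha; exacts [h a ha, rfl]

lemma hIstar_eq_add_sum_lt (g : T → ℝ) (b : T) :
    hIstar g b = g b + ∑ x, if x < b then g x else 0 := by
  have split : ∀ x, (if x ≤ b then g x else 0) =
      (if b = x then g x else 0) + if x < b then g x else 0 := fun x => by
    rcases eq_or_ne b x with rfl | hne
    · simp
    · simp [hne, le_iff_eq_or_lt, hne.symm]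
  rw [hIstar, sum_congr rfl fun x _ => split x, sum_add_distrib, sum_ite_eq]
  simp

lemma hI_eq_add_sum_gt (g : T → ℝ) (b : T) : hI g b = g b + ∑ x, if b < x then g x else 0 :=
  hIstar_eq_add_sum_lt (T := Tᵒᵈ) g b

lemma hI_hI_mul (f h : T → ℝ) (ω : T) :
    hI (fun a => hI f a * h a) ω = ∑ b, f b * ∑ a, if ω ≤ a ∧ a ≤ b then h a else 0 := by
  simp only [hI, sum_mul, mul_sum, ite_mul, zero_mul, mul_ite, mul_zero]
  rw [sum_comm]
  refine sum_congr rfl fun a _ => ?_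
  split_ifs with ha <;> simp [ha]

namespace IsTreeOrder

variable (htree : IsTreeOrder T)
include htree

lemma exists_min {x : T} {P : T → Prop} (hP : ∃ a, P a) (hx : ∀ a, P a → x ≤ a) :
    ∃ m, P m ∧ ∀ a, P a → m ≤ a := by
  obtain ⟨m, hm⟩ := exists_minimal_of_wellFoundedLT P hP
  refine ⟨m, hm.prop, fun a ha => ?_⟩
  rcases htree x a m (hx a ha) (hx m hm.prop) with h | h
  · exact hm.le_of_le ha h
  · exact h

lemma sum_le_of_forall_le {g : T → ℝ} (hg : ∀ a, 0 ≤ g a) {S : Finset T} {x : T} {s : ℝ}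
    (hs : 0 ≤ s) (hx : ∀ a ∈ S, x ≤ a) (hS : ∀ a ∈ S, hI g a ≤ s) : ∑ a ∈ S, g a ≤ s := by
  rcases S.eq_empty_or_nonempty with rfl | ⟨a, ha⟩
  · simpa using hs
  obtain ⟨m, hmS, hm⟩ := htree.exists_min (P := (· ∈ S)) ⟨a, ha⟩ hx
  calc ∑ a ∈ S, g a ≤ hI g m := by
        rw [hI, ← sum_filter]
        exact sum_le_sum_of_subset_of_nonneg (fun a ha => by simp [hm a ha]) fun a _ _ => hg a
    _ ≤ s := hS m hmS

lemma existsUnique_parent {c b : T} (hcb : c < b) : ∃! p, IsChild c p ∧ p ≤ b := by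
  obtain ⟨p, ⟨hcp, hpb⟩, hp⟩ :=
    htree.exists_min (P := fun x => c < x ∧ x ≤ b) ⟨b, hcb, le_rfl⟩ fun _ h => h.1.le
  have hchild : IsChild c p :=
    ⟨hcp, fun e hce hep => lt_irrefl p (hep.trans_le' (hp e ⟨hce, hep.le.trans hpb⟩))⟩
  refine ⟨p, ⟨hchild, hpb⟩, ?_⟩
  rintro x ⟨hcx, hxb⟩
  exact ((hp x ⟨hcx.1, hxb⟩).lt_or_eq.resolve_left fun hpx => hcx.2 p hcp hpx).symm

lemma sum_sum_children (g : T → ℝ) (b : T) :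
    (∑ x, if x ≤ b then ∑ c, (if IsChild c x then g c else 0) else 0) =
      ∑ c, if c < b then g c else 0 := by
  have parent_count : ∀ c, (∑ x, if x ≤ b ∧ IsChild c x then g c else 0) =
      if c < b then g c else 0 := fun c => by
    by_cases hcb : c < b
    · obtain ⟨p, hp, huniq⟩ := htree.existsUnique_parent hcb
      have : ∀ x, (x ≤ b ∧ IsChild c x) ↔ x = p :=
        fun x => ⟨fun h => huniq x ⟨h.2, h.1⟩, fun h => h ▸ ⟨hp.2, hp.1⟩⟩
      simp [this, hcb]
    · have : ∀ x, ¬(x ≤ b ∧ IsChild c x) := fun x h => hcb (h.2.1.trans_le h.1)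
      simp [this, hcb]
  calc (∑ x, if x ≤ b then ∑ c, (if IsChild c x then g c else 0) else 0)
      = ∑ x, ∑ c, if x ≤ b ∧ IsChild c x then g c else 0 :=
        sum_congr rfl fun x _ => by by_cases hx : x ≤ b <;> simp [hx]
    _ = ∑ c, if c < b then g c else 0 := by
        rw [sum_comm]
        exact sum_congr rfl fun c _ => parent_count c

lemma hIstar_hDelta (g : T → ℝ) (b : T) : hIstar (hDelta g) b = g b := by
  calc hIstar (hDelta g) b
      = hIstar g b - ∑ x, if x ≤ b then ∑ c, (if IsChild c x then g c else 0) else 0 := by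
        simp only [hIstar, hDelta, ← sum_sub_distrib]
        exact sum_congr rfl fun x _ => by split_ifs <;> simp
    _ = g b := by rw [htree.sum_sum_children, hIstar_eq_add_sum_lt]; ring

end IsTreeOrder

namespace Superadd

variable {g : T → ℝ} (hsup : Superadd g)
include hsup

lemma hDelta_nonneg (x : T) : 0 ≤ hDelta g x := sub_nonneg.2 (hsup x)

lemma monotone (htree : IsTreeOrder T) : Monotone g := fun a b hab => by
  rw [← htree.hIstar_hDelta g a, ← htree.hIstar_hDelta g b]
  exact hIstar_monotone hsup.hDelta_nonneg hab

lemma sum_sq_le (htree : IsTreeOrder T) (hg : ∀ a, 0 ≤ g a) {s : ℝ} (hs : 0 ≤ s) (b : T) :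
    (∑ a, if a ≤ b ∧ hI g a ≤ s then g a ^ 2 else 0) ≤ s * g b := by
  have chain_sum : ∀ x, (∑ a, if x ≤ a ∧ a ≤ b ∧ hI g a ≤ s then g a else 0) ≤
      if x ≤ b then s else 0 := fun x => by
    rw [← sum_filter]
    split_ifs with hxb
    · exact htree.sum_le_of_forall_le hg hs (fun a ha => (mem_filter.1 ha).2.1)
        fun a ha => (mem_filter.1 ha).2.2.2
    · exact (sum_eq_zero fun a ha => absurd ((mem_filter.1 ha).2.1.trans (mem_filter.1 ha).2.2.1)
        hxb).le
  calc (∑ a, if a ≤ b ∧ hI g a ≤ s then g a ^ 2 else 0)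
      = ∑ a, ∑ x, if x ≤ a ∧ a ≤ b ∧ hI g a ≤ s then hDelta g x * g a else 0 := by
        refine sum_congr rfl fun a _ => ?_
        by_cases h : a ≤ b ∧ hI g a ≤ s
        · rw [if_pos h, sq]
          nth_rewrite 1 [← htree.hIstar_hDelta g a]
          rw [hIstar, sum_mul]
          exact sum_congr rfl fun x _ => by simp [h]
        · simp [h]
    _ = ∑ x, hDelta g x * ∑ a, if x ≤ a ∧ a ≤ b ∧ hI g a ≤ s then g a else 0 := by
        rw [sum_comm]
        simp only [mul_sum, mul_ite, mul_zero]
    _ ≤ ∑ x, hDelta g x * if x ≤ b then s else 0 :=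
        sum_le_sum fun x _ => mul_le_mul_of_nonneg_left (chain_sum x) (hsup.hDelta_nonneg x)
    _ = s * g b := by
        rw [← htree.hIstar_hDelta g b, hIstar, mul_sum]
        exact sum_congr rfl fun x _ => by split_ifs <;> ring

end Superadd

namespace IsTreeOrder

variable (htree : IsTreeOrder T)
include htree

lemma sum_ite_Icc (g : T → ℝ) {ω b : T} (hωb : ω ≤ b) :
    (∑ a, if ω ≤ a ∧ a ≤ b then g a else 0) = hI g ω - hI g b + g b := by
  have split : ∀ a, (if ω ≤ a then g a else 0) =
      (if ω ≤ a ∧ a ≤ b then g a else 0) + if b < a then g a else 0 := fun a => by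
    by_cases hab : a ≤ b
    · simp [hab, hab.not_gt]
    · have : ω ≤ a ↔ b < a := ⟨fun hωa => ((htree ω a b hωa hωb).resolve_left hab).lt_of_not_ge hab,
        fun hba => hωb.trans hba.le⟩
      simp [hab, this]
  rw [hI_eq_add_sum_gt g b, hI, sum_congr rfl fun a _ => split a, sum_add_distrib]
  ring

lemma hI_le_hI_hI_mul {f g : T → ℝ} (hf : ∀ a, 0 ≤ f a) (hg : ∀ a, 0 ≤ g a) {δ lam : ℝ}
    (hsupp : ∀ a, f a ≠ 0 → hI g a ≤ δ) (hlam : 0 < lam) (hδ : 2 * δ ≤ lam) {ω : T}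
    (hω : lam ≤ hI g ω) : hI f ω ≤ hI (fun a => 2 / lam * hI f a * g a) ω := by
  set W : T → ℝ := fun b => ∑ a, if ω ≤ a ∧ a ≤ b then g a else 0
  have hW : ∀ b, 0 ≤ W b := fun b => sum_nonneg fun a _ => by split_ifs; exacts [hg a, le_rfl]
  have hI_eq : hI (fun a => 2 / lam * hI f a * g a) ω = ∑ b, f b * (2 / lam * W b) := by
    calc hI (fun a => 2 / lam * hI f a * g a) ω = hI (fun a => hI f a * (2 / lam * g a)) ω :=
          congrArg₂ hI (funext fun a => by ring) rfl
      _ = ∑ b, f b * (2 / lam * W b) := by simp only [hI_hI_mul, W, mul_sum, mul_ite, mul_zero]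
  rw [hI_eq, hI]
  refine sum_le_sum fun b _ => ?_
  by_cases hb : ω ≤ b ∧ f b ≠ 0
  · have : lam / 2 ≤ W b := by
      simp only [W]
      rw [htree.sum_ite_Icc g hb.1]
      linarith [hsupp b hb.2, hg b]
    calc (if ω ≤ b then f b else 0) = f b * (2 / lam * (lam / 2)) := by
          rw [if_pos hb.1]; field_simp
      _ ≤ f b * (2 / lam * W b) := by gcongr; exact hf b
  · have : (if ω ≤ b then f b else 0) = 0 := by
      split_ifs with hωb
      · exact not_not.1 fun hfb => hb ⟨hωb, hfb⟩
      · rfl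
    rw [this]
    exact mul_nonneg (hf b) (mul_nonneg (by positivity) (hW b))

lemma hI_sq_le {f g : T → ℝ} (hg : ∀ a, 0 ≤ g a) (hmono : Monotone g) {δ : ℝ} (hδ : 0 ≤ δ)
    (hsupp : ∀ a, f a ≠ 0 → hI g a ≤ δ) {a : T} (hga : 0 < g a) :
    hI f a ^ 2 ≤ δ * ∑ b, if a ≤ b then f b ^ 2 / g b else 0 := by
  set S := (univ.filter (a ≤ ·)).filter (f · ≠ 0)
  have hS : ∀ b ∈ S, a ≤ b ∧ f b ≠ 0 := fun b hb => by simpa [S] using hb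
  have hpos : ∀ b ∈ S, 0 < g b := fun b hb => hga.trans_le (hmono (hS b hb).1)
  calc hI f a ^ 2 = (∑ b ∈ S, f b) ^ 2 := by rw [hI, ← sum_filter, sum_filter_ne_zero]
    _ ≤ (∑ b ∈ S, g b) * ∑ b ∈ S, f b ^ 2 / g b :=
        sum_sq_le_sum_mul_sum_of_sq_le_mul S (fun b hb => (hpos b hb).le)
          (fun b _ => div_nonneg (sq_nonneg _) (hg b))
          fun b hb => by rw [mul_div_cancel₀ _ (hpos b hb).ne']
    _ ≤ δ * ∑ b, if a ≤ b then f b ^ 2 / g b else 0 := by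
        rw [← sum_filter]
        refine mul_le_mul (htree.sum_le_of_forall_le hg hδ (fun b hb => (hS b hb).1)
          fun b hb => hsupp b (hS b hb).2) (sum_le_sum_of_subset_of_nonneg (filter_subset _ _)
          fun b _ _ => div_nonneg (sq_nonneg _) (hg b)) ?_ hδ
        exact sum_nonneg fun b _ => div_nonneg (sq_nonneg _) (hg b)

lemma sum_sq_hI_mul_le {f g : T → ℝ} (hg : ∀ a, 0 ≤ g a) (hsup : Superadd g) {δ s : ℝ}
    (hδ : 0 ≤ δ) (hsupp : ∀ a, f a ≠ 0 → hI g a ≤ δ) (hs : 0 ≤ s) :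
    (∑ a, if hI g a ≤ s then (hI f a * g a) ^ 2 else 0) ≤ s * δ * ∑ a, f a ^ 2 := by
  set q : T → ℝ := fun b => f b ^ 2 / g b
  have hq : ∀ b, 0 ≤ q b := fun b => div_nonneg (sq_nonneg _) (hg b)
  have pointwise : ∀ a, (if hI g a ≤ s then (hI f a * g a) ^ 2 else 0) ≤
      δ * ∑ b, if a ≤ b ∧ hI g a ≤ s then q b * g a ^ 2 else 0 := fun a => by
    by_cases ha : hI g a ≤ s
    · rcases (hg a).eq_or_lt with hga | hga
      · simp [← hga]
      calc (if hI g a ≤ s then (hI f a * g a) ^ 2 else 0) = hI f a ^ 2 * g a ^ 2 := by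
            rw [if_pos ha, mul_pow]
        _ ≤ (δ * ∑ b, if a ≤ b then q b else 0) * g a ^ 2 := by
            gcongr
            exact htree.hI_sq_le hg (hsup.monotone htree) hδ hsupp hga
        _ = δ * ∑ b, if a ≤ b ∧ hI g a ≤ s then q b * g a ^ 2 else 0 := by
            simp only [ha, and_true, mul_assoc, sum_mul, ite_mul, zero_mul]
    · simp only [ha, if_false, and_false, sum_const_zero, mul_zero, le_refl]
  calc (∑ a, if hI g a ≤ s then (hI f a * g a) ^ 2 else 0)
      ≤ ∑ a, δ * ∑ b, if a ≤ b ∧ hI g a ≤ s then q b * g a ^ 2 else 0 :=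
        sum_le_sum fun a _ => pointwise a
    _ = δ * ∑ b, q b * ∑ a, if a ≤ b ∧ hI g a ≤ s then g a ^ 2 else 0 := by
        rw [← mul_sum, sum_comm]
        simp only [mul_sum, mul_ite, mul_zero]
    _ ≤ δ * ∑ b, q b * (s * g b) := by
        gcongr with b
        · exact hq b
        · exact hsup.sum_sq_le htree hg hs b
    _ ≤ δ * ∑ b, s * f b ^ 2 := by
        refine mul_le_mul_of_nonneg_left (sum_le_sum fun b _ => ?_) hδ
        have hqg : q b * g b ≤ f b ^ 2 := by
          rcases (hg b).eq_or_lt with hgb | hgb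
          · simpa [← hgb] using sq_nonneg (f b) -- here `q b = f b ^ 2 / 0 = 0`
          · rw [div_mul_cancel₀ _ hgb.ne']
        nlinarith
    _ = s * δ * ∑ a, f a ^ 2 := by rw [← mul_sum]; ring

end IsTreeOrder

end

theorem stmt10 {T : Type*} [Fintype T] [PartialOrder T] (htree : IsTreeOrder T)
    (f g : T → ℝ) (hf : ∀ a, 0 ≤ f a) (hg : ∀ a, 0 ≤ g a) (hsup : Superadd g)
    (δ lam : ℝ) (hδ : 0 < δ) (hlam : 10 * δ ≤ lam)
    (hsupp : ∀ a, f a ≠ 0 → hI g a ≤ δ) :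
    (∀ ω : T, lam ≤ hI g ω → hI g ω ≤ 2 * lam →
        hI f ω ≤
          hI (fun a => 2 / lam * hI f a * g a * (if hI g a ≤ 4 * lam then 1 else 0)) ω) ∧
    (∑ a, (2 / lam * hI f a * g a * (if hI g a ≤ 4 * lam then 1 else 0)) ^ 2
        ≤ 16 * δ / lam * ∑ a, f a ^ 2) := by
  have hlam_pos : 0 < lam := by linarith
  refine ⟨fun ω hω hω' => ?_, ?_⟩
  · calc hI f ω ≤ hI (fun a => 2 / lam * hI f a * g a) ω :=
          htree.hI_le_hI_hI_mul hf hg hsupp hlam_pos (by linarith) hω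
      _ = _ := hI_congr fun a hωa => by
          rw [if_pos ((hI_antitone hg hωa).trans (by linarith)), mul_one]
  · calc _ = (2 / lam) ^ 2 * ∑ a, if hI g a ≤ 4 * lam then (hI f a * g a) ^ 2 else 0 := by
          rw [mul_sum]
          exact sum_congr rfl fun a _ => by split_ifs <;> ring
      _ ≤ (2 / lam) ^ 2 * (4 * lam * δ * ∑ a, f a ^ 2) := by
          gcongr
          exact htree.sum_sq_hI_mul_le hg hsup hδ.le hsupp (by linarith)
      _ = 16 * δ / lam * ∑ a, f a ^ 2 := by
          field_simp
          ring
end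

section
/- Let $T^2$ be a bi-tree with tensor-product weight $w = w_1 \otimes w_2 \geq 0$, and let $f : T^2 \to [0,\infty)$ be superadditive in each parameter separately with $\operatorname{supp} f \subseteq \{ \mathbb{I}(wf) \leq \delta \}$. Then $\sum_{T^2} w\, (I_1(w_1 f))^2\, (I_2(w_2 f))^2 \leq 4 \delta^2 \sum_{T^2} w f^2$. -/
/-!
Write `F = I₁(w₁ f)` and `G = I₂(w₂ f)`. On a tree, `(I g)² ≤ 2 I(g · I g)` for `g ≥ 0`, because
any two points above a given one are comparable; so `F² G² ≤ 4 I₁(w₁ f F) I₂(w₂ f G)`. Exchanging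
the order of summation turns `∑ w I₁(w₁ f F) I₂(w₂ f G)` into `∑_β X(β) Y(β)` with
`X(β) = w₁(β₁) I₂*(w₂ f F)(β)` and `Y(β) = w₂(β₂) I₁*(w₁ f G)(β)`. Superadditivity gives
`f(β₁, ·) = I₂*(Δ₂ f)(β₁, ·)` with `Δ₂ f ≥ 0`, and wherever `Δ₂ f ≠ 0` we have `f ≠ 0`, so the tail sums
of `w₂ F` there are values of `𝕀(w f) ≤ δ`; hence `X ≤ δ w₁ f`, and symmetrically `Y ≤ δ w₂ f`.
-/

open Finset
open scoped Classical

section Tree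

variable {T : Type*} [PartialOrder T]

lemma IsTreeOrder.eq_of_isChild (h : IsTreeOrder T) {u z z' : T} (hz : IsChild u z)
    (hz' : IsChild u z') : z = z' := by
  rcases h u z z' hz.1.le hz'.1.le with hle | hle
  · exact hle.eq_of_not_lt fun hlt => hz'.2 z hz.1 hlt
  · exact (hle.eq_of_not_lt fun hlt => hz.2 z' hz'.1 hlt).symm

variable [Fintype T]

lemma exists_isChild_le {u y : T} (huy : u < y) : ∃ z, IsChild u z ∧ z ≤ y :=
  (IsStronglyAtomic.of_wellFounded_lt wellFounded_lt).exists_covBy_le_of_lt u y huy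

lemma sum_ite_le_eq_add (φ : T → ℝ) (y : T) :
    (∑ z, if z ≤ y then φ z else 0) = φ y + ∑ z, if z < y then φ z else 0 := by
  have hsplit : ∀ z, (if z ≤ y then φ z else 0)
      = (if z = y then φ z else 0) + (if z < y then φ z else 0) := by
    intro z
    rcases eq_or_ne z y with rfl | hne
    · simp
    · simp [hne, le_iff_lt_or_eq]
  simp only [hsplit, Finset.sum_add_distrib, Finset.sum_ite_eq', Finset.mem_univ, if_true]

lemma sum_ite_le_sum_isChild (h : IsTreeOrder T) (φ : T → ℝ) (y : T) :
    (∑ z, if z ≤ y then ∑ u, (if IsChild u z then φ u else 0) else 0)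
      = ∑ u, if u < y then φ u else 0 := by
  have hpush : ∀ z, (if z ≤ y then ∑ u, (if IsChild u z then φ u else 0) else 0)
      = ∑ u, if z ≤ y ∧ IsChild u z then φ u else 0 := fun z => by
    by_cases hzy : z ≤ y <;> simp [hzy]
  rw [Finset.sum_congr rfl fun z _ => hpush z, Finset.sum_comm]
  refine Finset.sum_congr rfl fun u _ => ?_
  -- each `u < y` has exactly one parent below `y`, since the elements above `u` form a chain
  by_cases huy : u < y
  · obtain ⟨z₀, hz₀, hz₀y⟩ := exists_isChild_le huy
    rw [if_pos huy, Finset.sum_eq_single z₀ _ (by simp), if_pos ⟨hz₀y, hz₀⟩]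
    exact fun z _ hz => if_neg fun hc => hz (h.eq_of_isChild hc.2 hz₀)
  · rw [if_neg huy]
    exact Finset.sum_eq_zero fun z _ => if_neg fun hc => huy (hc.2.1.trans_le hc.1)

theorem hIstar_hDelta (h : IsTreeOrder T) (φ : T → ℝ) : hIstar (hDelta φ) = φ := by
  funext y
  have hsub : ∀ z, (if z ≤ y then hDelta φ z else 0) = (if z ≤ y then φ z else 0)
      - if z ≤ y then ∑ u, (if IsChild u z then φ u else 0) else 0 := fun z => by
    rw [hDelta, ite_sub_ite, sub_zero]
  rw [hIstar, Finset.sum_congr rfl fun z _ => hsub z, Finset.sum_sub_distrib,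
    sum_ite_le_sum_isChild h, sum_ite_le_eq_add, add_sub_cancel_right]

lemma hI_nonneg_s12 {g : T → ℝ} (hg : ∀ x, 0 ≤ g x) (a : T) : 0 ≤ hI g a :=
  Finset.sum_nonneg fun b _ => ite_nonneg (hg b) le_rfl

lemma hIstar_nonneg {g : T → ℝ} (hg : ∀ x, 0 ≤ g x) (a : T) : 0 ≤ hIstar g a :=
  Finset.sum_nonneg fun b _ => ite_nonneg (hg b) le_rfl

lemma hDelta_nonneg {φ : T → ℝ} (hφ : Superadd φ) (z : T) : 0 ≤ hDelta φ z :=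
  sub_nonneg.2 (hφ z)

lemma hDelta_le {φ : T → ℝ} (hφ : ∀ x, 0 ≤ φ x) (z : T) : hDelta φ z ≤ φ z :=
  sub_le_self _ (Finset.sum_nonneg fun u _ => ite_nonneg (hφ u) le_rfl)

lemma sum_ite_Icc_le_hI {g : T → ℝ} (hg : ∀ x, 0 ≤ g x) (z c : T) :
    (∑ y, if z ≤ y ∧ y ≤ c then g y else 0) ≤ hI g z :=
  Finset.sum_le_sum fun y _ => by
    by_cases hy : z ≤ y ∧ y ≤ c
    · rw [if_pos hy, if_pos hy.1]
    · exact (if_neg hy).trans_le (ite_nonneg (hg y) le_rfl)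

theorem hIstar_mul_le (h : IsTreeOrder T) {φ g : T → ℝ} {δ : ℝ} (hφ : ∀ x, 0 ≤ φ x)
    (hsup : Superadd φ) (hg : ∀ x, 0 ≤ g x) (hδ : ∀ z, φ z ≠ 0 → hI g z ≤ δ) (c : T) :
    hIstar (fun y => φ y * g y) c ≤ δ * φ c := by
  have hterm : ∀ z, hDelta φ z * ∑ y, (if z ≤ y ∧ y ≤ c then g y else 0)
      ≤ if z ≤ c then hDelta φ z * δ else 0 := by
    intro z
    by_cases hzc : z ≤ c
    · rw [if_pos hzc]
      rcases (hDelta_nonneg hsup z).eq_or_lt with h0 | hpos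
      · rw [← h0, zero_mul, zero_mul]
      · have hφz : φ z ≠ 0 := (hpos.trans_le (hDelta_le hφ z)).ne'
        exact mul_le_mul_of_nonneg_left ((sum_ite_Icc_le_hI hg z c).trans (hδ z hφz)) hpos.le
    · rw [if_neg hzc, Finset.sum_eq_zero fun y _ => if_neg fun hy => hzc (hy.1.trans hy.2),
        mul_zero]
  calc hIstar (fun y => φ y * g y) c
      = hIstar (fun y => hIstar (hDelta φ) y * g y) c := by rw [hIstar_hDelta h]
    _ = ∑ z, hDelta φ z * ∑ y, (if z ≤ y ∧ y ≤ c then g y else 0) := by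
      simp only [hIstar, Finset.sum_mul, ite_mul, zero_mul, Finset.mul_sum, mul_ite, mul_zero]
      rw [Finset.sum_comm (f := fun z y => if z ≤ y ∧ y ≤ c then _ else _)]
      refine Finset.sum_congr rfl fun y _ => ?_
      by_cases hy : y ≤ c <;> simp [hy]
    _ ≤ ∑ z, if z ≤ c then hDelta φ z * δ else 0 := Finset.sum_le_sum fun z _ => hterm z
    _ = δ * hIstar (hDelta φ) c := by
      rw [hIstar, mul_comm, Finset.sum_mul]
      simp only [ite_mul, zero_mul]
    _ = δ * φ c := by rw [hIstar_hDelta h]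

theorem sq_hI_le (h : IsTreeOrder T) {g : T → ℝ} (hg : ∀ x, 0 ≤ g x) (α : T) :
    hI g α ^ 2 ≤ 2 * hI (fun b => g b * hI g b) α := by
  set A : T → T → ℝ := fun b b' => if α ≤ b ∧ b ≤ b' then g b * g b' else 0
  have hA : ∀ b b', 0 ≤ A b b' := fun b b' => ite_nonneg (mul_nonneg (hg b) (hg b')) le_rfl
  have hpair : ∀ b b', (if α ≤ b then g b else 0) * (if α ≤ b' then g b' else 0)
      ≤ A b b' + A b' b := by
    intro b b'
    by_cases hb : α ≤ b
    · by_cases hb' : α ≤ b'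
      · rcases h α b b' hb hb' with hle | hle
        · simp [A, hb, hb', hle, ite_nonneg (mul_nonneg (hg b') (hg b)) le_rfl]
        · simp [A, hb, hb', hle, mul_comm, ite_nonneg (mul_nonneg (hg b) (hg b')) le_rfl]
      · simpa [hb'] using add_nonneg (hA b b') (hA b' b)
    · simpa [hb] using add_nonneg (hA b b') (hA b' b)
  calc hI g α ^ 2
      = ∑ b, ∑ b', (if α ≤ b then g b else 0) * (if α ≤ b' then g b' else 0) := by
        rw [hI, sq, Finset.sum_mul_sum]
    _ ≤ ∑ b, ∑ b', (A b b' + A b' b) :=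
        Finset.sum_le_sum fun b _ => Finset.sum_le_sum fun b' _ => hpair b b'
    _ = 2 * ∑ b, ∑ b', A b b' := by
        simp only [Finset.sum_add_distrib]
        rw [Finset.sum_comm (f := fun b b' => A b' b)]
        ring
    _ = 2 * hI (fun b => g b * hI g b) α := by
        simp only [A, hI, ite_and, Finset.mul_sum, mul_ite, mul_zero]
        refine Finset.sum_congr rfl fun b _ => ?_
        by_cases hb : α ≤ b <;> simp [hb]

end Tree

section BiTree

variable {T1 T2 : Type*} [Fintype T1] [PartialOrder T1] [Fintype T2] [PartialOrder T2]

lemma hI_eq_hI_hI1 (g : T1 × T2 → ℝ) (a : T1 × T2) :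
    hI g a = hI (fun y => hI1 g (a.1, y)) a.2 := by
  rw [hI, Fintype.sum_prod_type, Finset.sum_comm]
  refine Finset.sum_congr rfl fun y _ => ?_
  by_cases hy : a.2 ≤ y <;> simp [hI1, Prod.le_def, hy]

lemma hI_comp_swap (g : T1 × T2 → ℝ) (a : T2 × T1) :
    hI (fun q => g q.swap) a = hI g a.swap :=
  Fintype.sum_equiv (Equiv.prodComm T2 T1) _ _ fun _ => by
    simp only [Equiv.prodComm_apply, Prod.swap_le_swap]

lemma sum_mul_hI1_mul_hI2 (w1 : T1 → ℝ) (w2 : T2 → ℝ) (u v : T1 × T2 → ℝ) :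
    ∑ a, w1 a.1 * w2 a.2 * (hI1 u a * hI2 v a)
      = ∑ p : T1 × T2,
          hIstar (fun y => w2 y * u (p.1, y)) p.2 * hIstar (fun x => w1 x * v (x, p.2)) p.1 := by
  have hL : ∀ a : T1 × T2, w1 a.1 * w2 a.2 * (hI1 u a * hI2 v a) = ∑ p : T1 × T2,
      w1 a.1 * w2 a.2 * ((if a.1 ≤ p.1 then u (p.1, a.2) else 0) *
        (if a.2 ≤ p.2 then v (a.1, p.2) else 0)) := fun a => by
    rw [hI1, hI2, Finset.sum_mul_sum, Finset.mul_sum, Fintype.sum_prod_type]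
    simp only [Finset.mul_sum]
  have hR : ∀ p : T1 × T2, hIstar (fun y => w2 y * u (p.1, y)) p.2 *
      hIstar (fun x => w1 x * v (x, p.2)) p.1 = ∑ a : T1 × T2,
      w1 a.1 * w2 a.2 * ((if a.1 ≤ p.1 then u (p.1, a.2) else 0) *
        (if a.2 ≤ p.2 then v (a.1, p.2) else 0)) := fun p => by
    rw [hIstar, hIstar, Finset.sum_mul_sum, Finset.sum_comm, Fintype.sum_prod_type]
    refine Finset.sum_congr rfl fun x _ => Finset.sum_congr rfl fun y _ => ?_
    split_ifs <;> ring
  rw [Finset.sum_congr rfl fun a _ => hL a, Finset.sum_congr rfl fun p _ => hR p,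
    Finset.sum_comm]

theorem hIstar_mul_hI1_le (h2 : IsTreeOrder T2) {w1 : T1 → ℝ} {w2 : T2 → ℝ}
    (hw1 : ∀ x, 0 ≤ w1 x) (hw2 : ∀ x, 0 ≤ w2 x) {f : T1 × T2 → ℝ} (hf : ∀ a, 0 ≤ f a)
    (hs2 : Superadd2 f) {δ : ℝ}
    (hsupp : ∀ a, f a ≠ 0 → hI (fun x => w1 x.1 * w2 x.2 * f x) a ≤ δ) (p : T1 × T2) :
    hIstar (fun y => w2 y * (w1 p.1 * f (p.1, y) * hI1 (fun q => w1 q.1 * f q) (p.1, y))) p.2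
      ≤ w1 p.1 * (δ * f p) := by
  have hrow : ∀ z, f (p.1, z) ≠ 0 →
      hI (fun y => w2 y * hI1 (fun q => w1 q.1 * f q) (p.1, y)) z ≤ δ := by
    intro z hz
    convert hsupp (p.1, z) hz using 1
    rw [hI_eq_hI_hI1]
    congr 1
    funext y
    simp only [hI1, Finset.mul_sum]
    refine Finset.sum_congr rfl fun b _ => ?_
    split_ifs <;> ring
  have hkey := hIstar_mul_le h2 (φ := fun y => f (p.1, y)) (fun y => hf _) (fun β => hs2 p.1 β)
    (fun y => mul_nonneg (hw2 y) (hI_nonneg_s12 (fun b => mul_nonneg (hw1 b) (hf _)) p.1)) hrow p.2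
  calc _ = w1 p.1 * hIstar (fun y => f (p.1, y) *
          (w2 y * hI1 (fun q => w1 q.1 * f q) (p.1, y))) p.2 := by
        rw [hIstar, hIstar, Finset.mul_sum]
        refine Finset.sum_congr rfl fun y _ => ?_
        split_ifs <;> ring
    _ ≤ w1 p.1 * (δ * f p) := mul_le_mul_of_nonneg_left hkey (hw1 _)

theorem hIstar_mul_hI2_le (h1 : IsTreeOrder T1) {w1 : T1 → ℝ} {w2 : T2 → ℝ}
    (hw1 : ∀ x, 0 ≤ w1 x) (hw2 : ∀ x, 0 ≤ w2 x) {f : T1 × T2 → ℝ} (hf : ∀ a, 0 ≤ f a)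
    (hs1 : Superadd1 f) {δ : ℝ}
    (hsupp : ∀ a, f a ≠ 0 → hI (fun x => w1 x.1 * w2 x.2 * f x) a ≤ δ) (p : T1 × T2) :
    hIstar (fun x => w1 x * (w2 p.2 * f (x, p.2) * hI2 (fun q => w2 q.2 * f q) (x, p.2))) p.1
      ≤ w2 p.2 * (δ * f p) := by
  have hsupp_swap : ∀ a : T2 × T1, f a.swap ≠ 0 →
      hI (fun x => w2 x.1 * w1 x.2 * f x.swap) a ≤ δ := fun a ha => by
    refine Eq.trans_le ?_ (hsupp a.swap ha)
    rw [← hI_comp_swap]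
    simp only [Prod.fst_swap, Prod.snd_swap, mul_comm (w2 _)]
  exact hIstar_mul_hI1_le (f := fun q => f q.swap) h1 hw2 hw1 (fun _ => hf _)
    (fun a β => hs1 β a) hsupp_swap p.swap

theorem sq_hI1_mul_sq_hI2_le (h1 : IsTreeOrder T1) (h2 : IsTreeOrder T2) {g1 g2 : T1 × T2 → ℝ}
    (hg1 : ∀ q, 0 ≤ g1 q) (hg2 : ∀ q, 0 ≤ g2 q) (a : T1 × T2) :
    hI1 g1 a ^ 2 * hI2 g2 a ^ 2
      ≤ 4 * (hI1 (fun q => g1 q * hI1 g1 q) a * hI2 (fun q => g2 q * hI2 g2 q) a) := by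
  have hP : 0 ≤ hI1 (fun q => g1 q * hI1 g1 q) a :=
    hI_nonneg_s12 (fun b => mul_nonneg (hg1 _) (hI_nonneg_s12 (fun b' => hg1 (b', a.2)) b)) a.1
  calc hI1 g1 a ^ 2 * hI2 g2 a ^ 2
      ≤ (2 * hI1 (fun q => g1 q * hI1 g1 q) a) * (2 * hI2 (fun q => g2 q * hI2 g2 q) a) :=
        mul_le_mul (sq_hI_le h1 (fun b => hg1 (b, a.2)) a.1)
          (sq_hI_le h2 (fun c => hg2 (a.1, c)) a.2) (sq_nonneg _) (by positivity)
    _ = 4 * (hI1 (fun q => g1 q * hI1 g1 q) a * hI2 (fun q => g2 q * hI2 g2 q) a) := by ring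

end BiTree

theorem stmt12 {T1 T2 : Type*} [Fintype T1] [PartialOrder T1] [Fintype T2] [PartialOrder T2]
    (h1 : IsTreeOrder T1) (h2 : IsTreeOrder T2)
    (w1 : T1 → ℝ) (w2 : T2 → ℝ) (hw1 : ∀ x, 0 ≤ w1 x) (hw2 : ∀ x, 0 ≤ w2 x)
    (f : T1 × T2 → ℝ) (hf : ∀ a, 0 ≤ f a)
    (hs1 : Superadd1 f) (hs2 : Superadd2 f) (δ : ℝ)
    (hsupp : ∀ a, f a ≠ 0 → hI (fun x => w1 x.1 * w2 x.2 * f x) a ≤ δ) :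
    ∑ a, w1 a.1 * w2 a.2 * (hI1 (fun x => w1 x.1 * f x) a) ^ 2 *
        (hI2 (fun x => w2 x.2 * f x) a) ^ 2
      ≤ 4 * δ ^ 2 * ∑ a, w1 a.1 * w2 a.2 * f a ^ 2 := by
  set g1 : T1 × T2 → ℝ := fun x => w1 x.1 * f x
  set g2 : T1 × T2 → ℝ := fun x => w2 x.2 * f x
  have hg1 : ∀ q, 0 ≤ g1 q := fun q => mul_nonneg (hw1 _) (hf q)
  have hg2 : ∀ q, 0 ≤ g2 q := fun q => mul_nonneg (hw2 _) (hf q)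
  have hX := hIstar_mul_hI1_le h2 hw1 hw2 hf hs2 hsupp
  have hX0 : ∀ p : T1 × T2, 0 ≤ hIstar (fun y => w2 y * (g1 (p.1, y) * hI1 g1 (p.1, y))) p.2 :=
    fun p => hIstar_nonneg (fun y => mul_nonneg (hw2 y) (mul_nonneg (hg1 _)
      (hI_nonneg_s12 (fun b => hg1 (b, y)) p.1))) p.2
  have hY0 : ∀ p : T1 × T2, 0 ≤ hIstar (fun x => w1 x * (g2 (x, p.2) * hI2 g2 (x, p.2))) p.1 :=
    fun p => hIstar_nonneg (fun x => mul_nonneg (hw1 x) (mul_nonneg (hg2 _)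
      (hI_nonneg_s12 (fun c => hg2 (x, c)) p.2))) p.1
  calc ∑ a, w1 a.1 * w2 a.2 * hI1 g1 a ^ 2 * hI2 g2 a ^ 2
      = ∑ a, w1 a.1 * w2 a.2 * (hI1 g1 a ^ 2 * hI2 g2 a ^ 2) := by simp only [mul_assoc]
    _ ≤ ∑ a, w1 a.1 * w2 a.2 *
          (4 * (hI1 (fun q => g1 q * hI1 g1 q) a * hI2 (fun q => g2 q * hI2 g2 q) a)) :=
        Finset.sum_le_sum fun a _ => mul_le_mul_of_nonneg_left
          (sq_hI1_mul_sq_hI2_le h1 h2 hg1 hg2 a) (mul_nonneg (hw1 _) (hw2 _))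
    _ = 4 * ∑ a, w1 a.1 * w2 a.2 *
          (hI1 (fun q => g1 q * hI1 g1 q) a * hI2 (fun q => g2 q * hI2 g2 q) a) := by
        rw [Finset.mul_sum]
        exact Finset.sum_congr rfl fun a _ => by ring
    _ = 4 * ∑ p : T1 × T2,
          hIstar (fun y => w2 y * (g1 (p.1, y) * hI1 g1 (p.1, y))) p.2 *
          hIstar (fun x => w1 x * (g2 (x, p.2) * hI2 g2 (x, p.2))) p.1 := by
        rw [sum_mul_hI1_mul_hI2]
    _ ≤ 4 * ∑ p : T1 × T2, w1 p.1 * (δ * f p) * (w2 p.2 * (δ * f p)) := by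
        gcongr with p
        exacts [hY0 p, (hX0 p).trans (hX p), hX p, hIstar_mul_hI2_le h1 hw1 hw2 hf hs1 hsupp p]
    _ = 4 * δ ^ 2 * ∑ a, w1 a.1 * w2 a.2 * f a ^ 2 := by
        simp only [Finset.mul_sum]
        exact Finset.sum_congr rfl fun a _ => by ring
end
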